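/- Let c ∈ Z³_≤(T¹, A¹) be an order-preserving 3-cocycle and define d(x,y) = c(x x⁻¹, x, y)⁻¹ · c(x, y, y⁻¹ y). Then d is an order-preserving 2-cochain, and the cohomologous cocycle c · δ²d is normalized. Consequently, every order-preserving 3-cocycle is cohomologous in Z³_≤ to a normalized order-preserving 3-cocycle. -/

import Mathlib

/-- An inverse semigroup: every element `s` has a (unique) inverse `s⁻¹`
with `s * s⁻¹ * s = s` and `s⁻¹ * s * s⁻¹ = s⁻¹`. -/
class InverseSemigroup (S : Type*) extends Semigroup S, Inv S where
  mul_inv_mul : ∀ s : S, s * s⁻¹ * s = s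
  inv_mul_inv : ∀ s : S, s⁻¹ * s * s⁻¹ = s⁻¹
  inv_unique : ∀ s t : S, s * t * s = s → t * s * t = t → t = s⁻¹

namespace InverseSemigroup

/-- The set of idempotents of a multiplicative structure. -/
def E (S : Type*) [Mul S] : Set S := {e | e * e = e}

/-- The natural partial order: `s ≤ t` iff `s = s * s⁻¹ * t`. -/
def nle {S : Type*} [Mul S] [Inv S] (s t : S) : Prop := s = s * s⁻¹ * t

/-- `r s = s * s⁻¹`. -/
def r {S : Type*} [Mul S] [Inv S] (s : S) : S := s * s⁻¹

/-- A Clifford semigroup (semilattice of groups): idempotents are central. -/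
def IsClifford (S : Type*) [Mul S] : Prop := ∀ e ∈ E S, ∀ s : S, e * s = s * e

end InverseSemigroup

open InverseSemigroup

/-!
Write `d` for the normalizing cochain. Every value `c x y z` lies in the group component of the
commutative inverse semigroup `A` over `θ (r (x * y * z))`, so group cancellations hold up to
idempotents, and these are absorbed by the support conditions. In this way `c * δ²d` is again a
cochain and a cocycle, while order preservation passes through products, inverses and `η`.

For normalization, the cocycle identity at quadruples containing an idempotent `e` gives
`c e s f = θ (r s)` whenever `e * s = s = s * f`, and expresses `c e u y`, `c v e w` and `c x u e`
through the values `c e e _` and `c _ e e`. Hence `d e s = (c e e s)⁻¹` when `e * s = s` and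
`d v e = c v e e` when `v * e = v`; substituting these, the factors of each of the three
normalization identities of `c * δ²d` cancel down to an idempotent `θ (r _)`.
-/

namespace InverseSemigroup

section Basic

variable {S : Type*} [InverseSemigroup S] {e f s t u v : S}

theorem inv_inv (s : S) : s⁻¹⁻¹ = s :=
  (inv_unique s⁻¹ s (inv_mul_inv s) (mul_inv_mul s)).symm

theorem inv_eq_self_of_mem_E (he : e ∈ E S) : e⁻¹ = e :=
  (inv_unique e e (by rw [he, he]) (by rw [he, he])).symm

theorem mul_inv_self_mem_E (s : S) : s * s⁻¹ ∈ E S := by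
  change s * s⁻¹ * (s * s⁻¹) = s * s⁻¹
  rw [← mul_assoc, mul_inv_mul]

theorem inv_mul_self_mem_E (s : S) : s⁻¹ * s ∈ E S := by
  change s⁻¹ * s * (s⁻¹ * s) = s⁻¹ * s
  rw [← mul_assoc, inv_mul_inv]

theorem r_mem_E (s : S) : r s ∈ E S := mul_inv_self_mem_E s

theorem mul_inv_mul_self (s : S) : s * (s⁻¹ * s) = s := by
  rw [← mul_assoc, mul_inv_mul]

theorem inv_mul_of_mem_E (he : e ∈ E S) (hf : f ∈ E S) :
    (e * f)⁻¹ = f * (e * f)⁻¹ * e := by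
  refine (inv_unique (e * f) _ ?_ ?_).symm
  · calc e * f * (f * (e * f)⁻¹ * e) * (e * f)
        = e * (f * f) * (e * f)⁻¹ * (e * e) * f := by simp only [mul_assoc]
      _ = e * f * (e * f)⁻¹ * (e * f) := by rw [he, hf]; simp only [mul_assoc]
      _ = e * f := mul_inv_mul _
  · calc f * (e * f)⁻¹ * e * (e * f) * (f * (e * f)⁻¹ * e)
        = f * ((e * f)⁻¹ * (e * e * (f * f)) * (e * f)⁻¹) * e := by simp only [mul_assoc]
      _ = f * (e * f)⁻¹ * e := by rw [he, hf, inv_mul_inv]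

theorem mul_mem_E (he : e ∈ E S) (hf : f ∈ E S) : e * f ∈ E S := by
  have hinv := inv_mul_of_mem_E he hf
  have hinv_mem : (e * f)⁻¹ ∈ E S :=
    calc (e * f)⁻¹ * (e * f)⁻¹ = f * (e * f)⁻¹ * e * (f * (e * f)⁻¹ * e) := by
          rw [← hinv]
      _ = f * ((e * f)⁻¹ * (e * f) * (e * f)⁻¹) * e := by simp only [mul_assoc]
      _ = (e * f)⁻¹ := by rw [inv_mul_inv, ← hinv]
  have : e * f = (e * f)⁻¹ := by rw [← inv_eq_self_of_mem_E hinv_mem, inv_inv]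
  rw [this]
  exact hinv_mem

theorem mul_comm_of_mem_E (he : e ∈ E S) (hf : f ∈ E S) : e * f = f * e := by
  have key : ∀ {a b : S}, a ∈ E S → b ∈ E S → a * b * (b * a) * (a * b) = a * b := by
    intro a b ha hb
    calc a * b * (b * a) * (a * b) = a * (b * b) * (a * a) * b := by simp only [mul_assoc]
      _ = a * b * (a * b) := by rw [ha, hb]; simp only [mul_assoc]
      _ = a * b := mul_mem_E ha hb
  rw [inv_unique (e * f) (f * e) (key he hf) (key hf he), inv_eq_self_of_mem_E (mul_mem_E he hf)]

theorem mul_inv_rev (s t : S) : (s * t)⁻¹ = t⁻¹ * s⁻¹ := by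
  refine (inv_unique (s * t) (t⁻¹ * s⁻¹) ?_ ?_).symm
  · calc s * t * (t⁻¹ * s⁻¹) * (s * t) = s * (t * t⁻¹ * (s⁻¹ * s)) * t := by
          simp only [mul_assoc]
      _ = s * s⁻¹ * s * (t * t⁻¹ * t) := by
          rw [mul_comm_of_mem_E (mul_inv_self_mem_E t) (inv_mul_self_mem_E s)]
          simp only [mul_assoc]
      _ = s * t := by rw [mul_inv_mul, mul_inv_mul]
  · calc t⁻¹ * s⁻¹ * (s * t) * (t⁻¹ * s⁻¹)
        = t⁻¹ * (s⁻¹ * s * (t * t⁻¹)) * s⁻¹ := by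
          simp only [mul_assoc]
      _ = t⁻¹ * t * t⁻¹ * (s⁻¹ * s * s⁻¹) := by
          rw [mul_comm_of_mem_E (inv_mul_self_mem_E s) (mul_inv_self_mem_E t)]
          simp only [mul_assoc]
      _ = t⁻¹ * s⁻¹ := by rw [inv_mul_inv, inv_mul_inv]

theorem r_mul_mul_r (s t : S) : r (s * t) * r s = r (s * t) := by
  calc r (s * t) * r s = s * (t * t⁻¹ * (s⁻¹ * s)) * s⁻¹ := by
        simp only [r, mul_inv_rev, mul_assoc]
    _ = s * s⁻¹ * s * (t * t⁻¹) * s⁻¹ := by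
        rw [mul_comm_of_mem_E (mul_inv_self_mem_E t) (inv_mul_self_mem_E s)]
        simp only [mul_assoc]
    _ = r (s * t) := by rw [mul_inv_mul]; simp only [r, mul_inv_rev, mul_assoc]

theorem mul_r_mul_inv (x s : S) : x * r s * x⁻¹ = r (x * s) := by
  simp only [r, mul_inv_rev, mul_assoc]

theorem eq_of_mul_eq_mul_right (h : s * u = t * u) (hs : s * r u = s) (ht : t * r u = t) :
    s = t := by
  rw [← hs, ← ht, r, ← mul_assoc, ← mul_assoc, h]

theorem nle_of_eq_idem_mul (he : e ∈ E S) (h : s = e * t) : nle s t := by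
  have hr : s * s⁻¹ = e * (t * t⁻¹) := by
    calc s * s⁻¹ = e * (t * t⁻¹ * e) := by
          rw [h, mul_inv_rev, inv_eq_self_of_mem_E he]; simp only [mul_assoc]
      _ = e * (t * t⁻¹) := by rw [mul_comm_of_mem_E (mul_inv_self_mem_E t) he, ← mul_assoc, he]
  change s = s * s⁻¹ * t
  rw [hr, mul_assoc, mul_inv_mul, ← h]

theorem nle_of_eq_mul_idem (he : e ∈ E S) (h : s = t * e) : nle s t := by
  have hr : s * s⁻¹ = t * e * t⁻¹ := by
    rw [h, mul_inv_rev, inv_eq_self_of_mem_E he, mul_assoc, ← mul_assoc e, he, ← mul_assoc]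
  change s = s * s⁻¹ * t
  calc s = t * t⁻¹ * t * e := by rw [mul_inv_mul, h]
    _ = t * (t⁻¹ * t * e) := by simp only [mul_assoc]
    _ = t * e * t⁻¹ * t := by
        rw [mul_comm_of_mem_E (inv_mul_self_mem_E t) he]
        simp only [mul_assoc]
    _ = s * s⁻¹ * t := by rw [hr]

theorem nle_trans (h₁ : nle s t) (h₂ : nle t u) : nle s u :=
  nle_of_eq_idem_mul (mul_mem_E (mul_inv_self_mem_E s) (mul_inv_self_mem_E t)) <| by
    rw [mul_assoc (s * s⁻¹), ← h₂]
    exact h₁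

theorem nle_inv (h : nle s t) : nle s⁻¹ t⁻¹ :=
  nle_of_eq_mul_idem (mul_inv_self_mem_E s) <| by
    conv_lhs => rw [h]
    rw [mul_inv_rev, inv_eq_self_of_mem_E (mul_inv_self_mem_E s)]

theorem eq_mul_inv_mul_self_of_nle (h : nle s t) : s = t * (s⁻¹ * s) :=
  calc s = s⁻¹⁻¹ := (inv_inv s).symm
    _ = (s⁻¹ * s⁻¹⁻¹ * t⁻¹)⁻¹ := by rw [← nle_inv h]
    _ = t * (s⁻¹ * s) := by simp only [mul_inv_rev, inv_inv]

theorem nle_mul (h₁ : nle s t) (h₂ : nle u v) : nle (s * u) (t * v) := by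
  refine nle_trans (t := t * v * (u⁻¹ * u)) (nle_of_eq_idem_mul (mul_inv_self_mem_E s) ?_)
    (nle_of_eq_mul_idem (inv_mul_self_mem_E u) rfl)
  conv_lhs => rw [h₁, eq_mul_inv_mul_self_of_nle h₂]
  simp only [mul_assoc]

end Basic

section Commutative

variable {A : Type*} [InverseSemigroup A] [Std.Commutative (α := A) (· * ·)] {a b c : A}

theorem mul_comm_of_commutative (a b : A) : a * b = b * a :=
  Std.Commutative.comm (op := (· * ·)) a b

theorem mul_r_self (a : A) : a * r a = a := by
  rw [mul_comm_of_commutative]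
  exact mul_inv_mul a

theorem r_mul (a b : A) : r (a * b) = r a * r b := by
  simp only [r, mul_inv_rev]
  ac_rfl

theorem r_inv (a : A) : r a⁻¹ = r a := by
  rw [r, inv_inv, mul_comm_of_commutative]
  rfl

theorem mul_eq_self_of_r_mul_eq (h : r a * b = r a) : a * b = a := by
  calc a * b = a * (r a * b) := by rw [← mul_assoc, mul_r_self]
    _ = a := by rw [h, mul_r_self]

theorem mul_mul_eq_of_r_mul_eq {g : A} (h : r a * g = r a) : a * b * g = a * b := by
  rw [mul_assoc, mul_comm_of_commutative b, ← mul_assoc, mul_eq_self_of_r_mul_eq h]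

theorem mul_r_eq_self_of_r_eq (h : r a = r b) : a * r b = a := by
  rw [← h, mul_r_self]

theorem eq_r_of_mul_mul_self_eq (h : a * b * b = b * a) (hab : r a = r b) : b = r b := by
  have hr : r (a * b) = r b := by rw [r_mul, hab, (r_mem_E b : r b * r b = r b)]
  refine eq_of_mul_eq_mul_right (u := a * b) ?_ (mul_r_eq_self_of_r_eq hr.symm) ?_
  · rw [mul_comm_of_commutative b, h, mul_comm_of_commutative (r b), mul_assoc, mul_r_self,
      mul_comm_of_commutative]
  · rw [hr]; exact r_mem_E b

end Commutative

section Module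

variable {T A : Type*} [InverseSemigroup T] [InverseSemigroup A]

structure IsModuleStructure (θ : T → A) (η : T → A → A) : Prop where
  θ_mem_E : ∀ e ∈ E T, θ e ∈ E A
  θ_mul : ∀ e ∈ E T, ∀ f ∈ E T, θ (e * f) = θ e * θ f
  η_mul_left : ∀ t u : T, ∀ a : A, η (t * u) a = η t (η u a)
  η_mul : ∀ t : T, ∀ a b : A, η t (a * b) = η t a * η t b
  η_of_mem_E : ∀ e ∈ E T, ∀ a : A, η e a = θ e * a
  η_θ : ∀ t : T, ∀ e ∈ E T, η t (θ e) = θ (t * e * t⁻¹)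

namespace IsModuleStructure

variable {θ : T → A} {η : T → A → A} (M : IsModuleStructure θ η) {e s x x' : T} {a a' : A}
include M

theorem θ_r_mem_E (s : T) : θ (r s) ∈ E A := M.θ_mem_E _ (r_mem_E s)

theorem θ_r_mul_θ_r (s t : T) : θ (r (s * t)) * θ (r s) = θ (r (s * t)) := by
  rw [← M.θ_mul _ (r_mem_E _) _ (r_mem_E _), r_mul_mul_r]

theorem θ_r_mul_θ_of_idem_mul_eq (he : e ∈ E T) (hes : e * s = s) :
    θ (r s) * θ e = θ (r s) := by
  rw [← M.θ_mul _ (r_mem_E _) _ he, mul_comm_of_mem_E (r_mem_E s) he, r, ← mul_assoc, hes]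

theorem η_inv (t : T) (a : A) : η t a⁻¹ = (η t a)⁻¹ :=
  inv_unique (η t a) (η t a⁻¹) (by rw [← M.η_mul, ← M.η_mul, mul_inv_mul])
    (by rw [← M.η_mul, ← M.η_mul, inv_mul_inv])

theorem r_η (t : T) (a : A) : r (η t a) = η t (r a) := by
  rw [r, r, ← M.η_inv, M.η_mul]

theorem η_θ_r (x s : T) : η x (θ (r s)) = θ (r (x * s)) := by
  rw [M.η_θ _ _ (r_mem_E s), mul_r_mul_inv]

theorem η_nle (hx : nle x x') (ha : nle a a') : nle (η x a) (η x' a') := by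
  have hxa : nle (η x a) (η x' a) := by
    refine nle_of_eq_idem_mul (M.θ_r_mem_E x) ?_
    conv_lhs => rw [show x = r x * x' from hx]
    rw [M.η_mul_left, M.η_of_mem_E _ (r_mem_E x)]
  refine nle_trans hxa ?_
  change η x' a = r (η x' a) * η x' a'
  conv_lhs => rw [show a = r a * a' from ha]
  rw [M.η_mul, M.r_η]

theorem η_eq_self_of_r_eq [Std.Commutative (α := A) (· * ·)] (he : e ∈ E T) (hes : e * s = s)
    (ha : r a = θ (r s)) : η e a = a := by
  rw [M.η_of_mem_E _ he, mul_comm_of_commutative]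
  apply mul_eq_self_of_r_mul_eq
  rw [ha, M.θ_r_mul_θ_of_idem_mul_eq he hes]

end IsModuleStructure

end Module

section Cochains

variable {T A : Type*} [InverseSemigroup T] [InverseSemigroup A]

-- `d x y` lies in the group component `A_{θ (r (x * y))}` of `A`.
def IsCochain2 (θ : T → A) (d : T → T → A) : Prop :=
  ∀ x y, r (d x y) = θ (r (x * y))

def IsCochain3 (θ : T → A) (c : T → T → T → A) : Prop :=
  ∀ x y z, r (c x y z) = θ (r (x * y * z))

def IsOrderPreserving2 (d : T → T → A) : Prop :=
  ∀ x x' y y', nle x x' → nle y y' → nle (d x y) (d x' y')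

def IsOrderPreserving3 (c : T → T → T → A) : Prop :=
  ∀ x x' y y' z z', nle x x' → nle y y' → nle z z' → nle (c x y z) (c x' y' z')

def IsCocycle3 (η : T → A → A) (c : T → T → T → A) : Prop :=
  ∀ x y z w, η x (c y z w) * c x y z * c x (y * z) w = c x y (z * w) * c (x * y) z w

def IsNormalized3 (θ : T → A) (c : T → T → T → A) : Prop :=
  ∀ x y, ∀ e ∈ E T,
    c e (e * x) y = θ (r (e * x * y)) ∧
    c (x * e) e (e * y) = θ (r (x * e * y)) ∧
    c x (y * e) e = θ (r (x * y * e))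

def coboundary2 (η : T → A → A) (d : T → T → A) : T → T → T → A :=
  fun x y z => η x (d y z) * (d (x * y) z)⁻¹ * d x (y * z) * (d x y)⁻¹

def normalizingCochain (c : T → T → T → A) : T → T → A :=
  fun x y => (c (x * x⁻¹) x y)⁻¹ * c x y (y⁻¹ * y)

variable {θ : T → A} {η : T → A → A} {c c' : T → T → T → A} {d : T → T → A}

theorem IsOrderPreserving3.mul (hc : IsOrderPreserving3 c) (hc' : IsOrderPreserving3 c') :
    IsOrderPreserving3 (c * c') :=
  fun _ _ _ _ _ _ hx hy hz => nle_mul (hc _ _ _ _ _ _ hx hy hz) (hc' _ _ _ _ _ _ hx hy hz)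

theorem IsOrderPreserving3.isOrderPreserving2_normalizingCochain (hc : IsOrderPreserving3 c) :
    IsOrderPreserving2 (normalizingCochain c) := fun _ _ _ _ hx hy =>
  nle_mul (nle_inv (hc _ _ _ _ _ _ (nle_mul hx (nle_inv hx)) hx hy))
    (hc _ _ _ _ _ _ hx hy (nle_mul (nle_inv hy) hy))

theorem IsOrderPreserving2.isOrderPreserving3_coboundary2 (M : IsModuleStructure θ η)
    (hd : IsOrderPreserving2 d) : IsOrderPreserving3 (coboundary2 η d) :=
  fun _ _ _ _ _ _ hx hy hz => nle_mul (nle_mul (nle_mul (M.η_nle hx (hd _ _ _ _ hy hz))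
    (nle_inv (hd _ _ _ _ (nle_mul hx hy) hz))) (hd _ _ _ _ hx (nle_mul hy hz)))
    (nle_inv (hd _ _ _ _ hx hy))

variable [Std.Commutative (α := A) (· * ·)]

theorem IsCochain3.mul (M : IsModuleStructure θ η) (hc : IsCochain3 θ c)
    (hc' : IsCochain3 θ c') : IsCochain3 θ (c * c') := fun x y z => by
  rw [Pi.mul_apply, Pi.mul_apply, Pi.mul_apply, r_mul, hc, hc', M.θ_r_mem_E]

theorem IsCochain3.isCochain2_normalizingCochain (M : IsModuleStructure θ η)
    (hc : IsCochain3 θ c) : IsCochain2 θ (normalizingCochain c) := fun x y => by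
  rw [normalizingCochain, r_mul, r_inv, hc, hc, mul_inv_mul, mul_assoc,
    mul_inv_mul_self, M.θ_r_mem_E]

theorem IsCochain2.isCochain3_coboundary2 (M : IsModuleStructure θ η) (hd : IsCochain2 θ d) :
    IsCochain3 θ (coboundary2 η d) := fun x y z => by
  simp only [coboundary2, r_mul, r_inv, M.r_η]
  rw [hd, hd, hd, hd, M.η_θ_r, ← mul_assoc x y z, M.θ_r_mem_E, M.θ_r_mem_E, M.θ_r_mul_θ_r]

theorem IsCocycle3.mul (M : IsModuleStructure θ η) (hc : IsCocycle3 η c)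
    (hc' : IsCocycle3 η c') : IsCocycle3 η (c * c') := fun x y z w => by
  simp only [Pi.mul_apply, M.η_mul]
  calc _ = (η x (c y z w) * c x y z * c x (y * z) w) *
        (η x (c' y z w) * c' x y z * c' x (y * z) w) := by ac_rfl
    _ = _ := by rw [hc, hc']; ac_rfl

theorem IsCochain2.isCocycle3_coboundary2 (M : IsModuleStructure θ η) (hd : IsCochain2 θ d) :
    IsCocycle3 η (coboundary2 η d) := fun x y z w => by
  simp only [coboundary2, M.η_mul, M.η_inv, ← M.η_mul_left]
  rw [← mul_assoc x y z, mul_assoc y z w]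
  have hD := hd x (y * (z * w))
  generalize d x (y * (z * w)) = D at hD ⊢
  have h₁ : r D * θ (r (x * (y * z * w))) = r D := by
    rw [hD, ← mul_assoc y z w]; exact M.θ_r_mem_E _
  have h₂ : r D * θ (r (x * (y * z))) = r D := by
    have := M.θ_r_mul_θ_r (x * (y * z)) w
    simp only [mul_assoc] at this
    rwa [hD]
  have h₃ : r D * r (d (x * y) (z * w)) = r D := by
    rw [hd, hD, ← mul_assoc x y (z * w)]; exact M.θ_r_mem_E _
  calc _ = D * (η (x * y) (d z w) * η x (d y (z * w)) * (d (x * y) z)⁻¹ * (d x y)⁻¹ *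
          (d (x * y * z) w)⁻¹) * r (η x (d (y * z) w)) * r (η x (d y z)) *
          r (d x (y * z)) := by
        simp only [r]; ac_rfl
    _ = D * (η (x * y) (d z w) * η x (d y (z * w)) * (d (x * y) z)⁻¹ * (d x y)⁻¹ *
          (d (x * y * z) w)⁻¹) := by
        rw [M.r_η, M.r_η, hd, hd, hd, M.η_θ_r, M.η_θ_r, mul_mul_eq_of_r_mul_eq h₁,
          mul_mul_eq_of_r_mul_eq h₂, mul_mul_eq_of_r_mul_eq h₂]
    _ = D * (η (x * y) (d z w) * η x (d y (z * w)) * (d (x * y) z)⁻¹ * (d x y)⁻¹ *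
          (d (x * y * z) w)⁻¹) * r (d (x * y) (z * w)) := (mul_mul_eq_of_r_mul_eq h₃).symm
    _ = _ := by simp only [r]; ac_rfl

end Cochains

namespace IsCocycle3

variable {T A : Type*} [InverseSemigroup T] [InverseSemigroup A]
  [Std.Commutative (α := A) (· * ·)] {θ : T → A} {η : T → A → A} {c : T → T → T → A}
  {e f s u v w : T}
  (hc : IsCochain3 θ c) (hcoc : IsCocycle3 η c)
include hc hcoc

theorem idem_left_right_eq (M : IsModuleStructure θ η) (he : e ∈ E T) (hf : f ∈ E T)
    (hes : e * s = s) (hsf : s * f = s) : c e s f = θ (r s) := by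
  have h := hcoc e s f f
  rw [hsf, hf, hes, M.η_eq_self_of_r_eq he hes (by rw [hc, hsf, hsf])] at h
  rw [eq_r_of_mul_mul_self_eq h (by rw [hc, hc, hsf, hsf, hes, hsf]), hc, hes, hsf]

theorem idem_idem_left_mul (M : IsModuleStructure θ η) (he : e ∈ E T) (heu : e * u = u) (y : T) :
    c e u y * c e e u = c e e (u * y) := by
  have h := hcoc e e u y
  rw [heu, he, M.η_eq_self_of_r_eq he (s := u * y) (by rw [← mul_assoc, heu]) (by rw [hc, heu])]
    at h
  refine eq_of_mul_eq_mul_right h ?_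
    (mul_r_eq_self_of_r_eq (by rw [hc, hc, he, ← mul_assoc, heu]))
  rw [mul_assoc, mul_comm_of_commutative (c e e u), ← mul_assoc, mul_r_self]

theorem idem_idem_middle (M : IsModuleStructure θ η) (he : e ∈ E T) (hve : v * e = v)
    (hew : e * w = w) : c v e w = η v (c e e w) * c v e e := by
  have h := hcoc v e e w
  rw [he, hew, hve] at h
  refine (eq_of_mul_eq_mul_right h ?_ (mul_r_self _)).symm
  have hr : r (η v (c e e w)) = r (c v e w) := by
    rw [M.r_η, hc, hc, he, hew, M.η_θ_r, hve]
  rw [mul_assoc, mul_comm_of_commutative (c v e e), ← mul_assoc, mul_r_eq_self_of_r_eq hr]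

theorem idem_idem_right_mul (he : e ∈ E T) (hue : u * e = u) (x : T) :
    η x (c u e e) * c x u e = c (x * u) e e := by
  have h := hcoc x u e e
  rw [hue, he, mul_comm_of_commutative (c x u e)] at h
  refine eq_of_mul_eq_mul_right h (by rw [mul_assoc, mul_r_self]) (mul_r_eq_self_of_r_eq ?_)
  rw [hc, hc, mul_assoc x u e, hue, mul_assoc x u e, hue]

theorem normalizingCochain_of_idem_mul_eq (M : IsModuleStructure θ η) (he : e ∈ E T)
    (hes : e * s = s) : normalizingCochain c e s = (c e e s)⁻¹ := by
  rw [normalizingCochain, inv_eq_self_of_mem_E he, he,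
    idem_left_right_eq hc hcoc M he (inv_mul_self_mem_E s) hes (mul_inv_mul_self s)]
  apply mul_eq_self_of_r_mul_eq
  rw [r_inv, hc, he, hes]
  exact M.θ_r_mem_E s

theorem normalizingCochain_of_mul_idem_eq (M : IsModuleStructure θ η) (he : e ∈ E T)
    (hve : v * e = v) : normalizingCochain c v e = c v e e := by
  rw [normalizingCochain, inv_eq_self_of_mem_E he, he,
    idem_left_right_eq hc hcoc M (mul_inv_self_mem_E v) he (mul_inv_mul v) hve,
    inv_eq_self_of_mem_E (M.θ_r_mem_E v), mul_comm_of_commutative]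
  apply mul_eq_self_of_r_mul_eq
  rw [hc, hve, hve]
  exact M.θ_r_mem_E v

theorem normalized_apply_idem_left (M : IsModuleStructure θ η) (he : e ∈ E T) (heu : e * u = u)
    (y : T) :
    (c * coboundary2 η (normalizingCochain c)) e u y = θ (r (u * y)) := by
  have hd := hc.isCochain2_normalizingCochain M
  have heuy : e * (u * y) = u * y := by rw [← mul_assoc, heu]
  simp only [Pi.mul_apply, coboundary2]
  rw [heu, M.η_eq_self_of_r_eq he heuy (hd u y),
    normalizingCochain_of_idem_mul_eq hc hcoc M he heuy,
    normalizingCochain_of_idem_mul_eq hc hcoc M he heu, inv_inv]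
  calc _ = c e u y * c e e u * (c e e (u * y))⁻¹ * r (normalizingCochain c u y) := by
        simp only [r]; ac_rfl
    _ = r (c e e (u * y)) * r (normalizingCochain c u y) := by
        rw [idem_idem_left_mul hc hcoc M he heu]; rfl
    _ = θ (r (u * y)) := by
        rw [hc, hd, he, ← mul_assoc, heu]
        exact M.θ_r_mem_E _

theorem normalized_apply_idem_middle (M : IsModuleStructure θ η) (he : e ∈ E T) (hve : v * e = v)
    (hew : e * w = w) :
    (c * coboundary2 η (normalizingCochain c)) v e w = θ (r (v * w)) := by
  have hd := hc.isCochain2_normalizingCochain M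
  simp only [Pi.mul_apply, coboundary2]
  rw [hve, hew, normalizingCochain_of_idem_mul_eq hc hcoc M he hew, M.η_inv,
    normalizingCochain_of_mul_idem_eq hc hcoc M he hve, idem_idem_middle hc hcoc M he hve hew]
  calc _ = r (η v (c e e w)) * r (c v e e) * r (normalizingCochain c v w) := by
        simp only [r]; ac_rfl
    _ = θ (r (v * w)) := by
        rw [M.r_η, hc, hc, hd, he, hew, M.η_θ_r, hve, hve, M.θ_r_mul_θ_r, M.θ_r_mem_E]

theorem normalized_apply_idem_right (M : IsModuleStructure θ η) (he : e ∈ E T) (hue : u * e = u)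
    (x : T) :
    (c * coboundary2 η (normalizingCochain c)) x u e = θ (r (x * u)) := by
  have hd := hc.isCochain2_normalizingCochain M
  simp only [Pi.mul_apply, coboundary2]
  rw [hue, normalizingCochain_of_mul_idem_eq hc hcoc M he hue,
    normalizingCochain_of_mul_idem_eq hc hcoc M he (v := x * u) (by rw [mul_assoc, hue])]
  calc _ = η x (c u e e) * c x u e * (c (x * u) e e)⁻¹ * r (normalizingCochain c x u) := by
        simp only [r]; ac_rfl
    _ = r (c (x * u) e e) * r (normalizingCochain c x u) := by
        rw [idem_idem_right_mul hc hcoc he hue]; rfl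
    _ = θ (r (x * u)) := by
        rw [hc, hd, mul_assoc x u e, hue, mul_assoc x u e, hue]
        exact M.θ_r_mem_E _

theorem isNormalized3_mul_coboundary2 (M : IsModuleStructure θ η) :
    IsNormalized3 θ (c * coboundary2 η (normalizingCochain c)) := by
  intro x y e he
  refine ⟨normalized_apply_idem_left hc hcoc M he (by rw [← mul_assoc, he]) y, ?_, ?_⟩
  · rw [normalized_apply_idem_middle hc hcoc M he (by rw [mul_assoc, he])
      (by rw [← mul_assoc, he]), ← mul_assoc, mul_assoc x e e, he]
  · rw [normalized_apply_idem_right hc hcoc M he (by rw [mul_assoc, he]), ← mul_assoc]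

end IsCocycle3

end InverseSemigroup

theorem cocycle_cohomologous_to_normalized_general {T A : Type*}
    [InverseSemigroup T] [InverseSemigroup A]
    (θ : T → A) (η : T → A → A)
    (hAcomm : ∀ a b : A, a * b = b * a)
    (hθE : ∀ e ∈ E T, θ e ∈ E A)
    (hθmul : ∀ e ∈ E T, ∀ f ∈ E T, θ (e * f) = θ e * θ f)
    (hηhom : ∀ t u : T, ∀ a : A, η (t * u) a = η t (η u a))
    (hηmul : ∀ t : T, ∀ a b : A, η t (a * b) = η t a * η t b)
    (hη1 : ∀ e ∈ E T, ∀ a : A, η e a = θ e * a)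
    (hη2 : ∀ t : T, ∀ e ∈ E T, η t (θ e) = θ (t * e * t⁻¹))
    (c : T → T → T → A)
    (hc : ∀ x y z : T, c x y z * (c x y z)⁻¹ = θ (r (x * y * z)))
    (hcoc : ∀ x y z w : T,
      η x (c y z w) * c x y z * c x (y * z) w = c x y (z * w) * c (x * y) z w)
    (hop : ∀ x x' y y' z z' : T, nle x x' → nle y y' → nle z z' →
      nle (c x y z) (c x' y' z'))
    : let d : T → T → A := fun x y => (c (x * x⁻¹) x y)⁻¹ * c x y (y⁻¹ * y)
      let c' : T → T → T → A := fun x y z =>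
        c x y z * (η x (d y z) * (d (x * y) z)⁻¹ * d x (y * z) * (d x y)⁻¹)
      (∀ x y : T, d x y * (d x y)⁻¹ = θ (r (x * y))) ∧
      (∀ x x' y y' : T, nle x x' → nle y y' → nle (d x y) (d x' y')) ∧
      (∀ x y z : T, c' x y z * (c' x y z)⁻¹ = θ (r (x * y * z))) ∧
      (∀ x y z w : T,
        η x (c' y z w) * c' x y z * c' x (y * z) w = c' x y (z * w) * c' (x * y) z w) ∧
      (∀ x x' y y' z z' : T, nle x x' → nle y y' → nle z z' →
        nle (c' x y z) (c' x' y' z')) ∧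
      (∀ x y : T, ∀ e ∈ E T,
        c' e (e * x) y = θ (r (e * x * y)) ∧
        c' (x * e) e (e * y) = θ (r (x * e * y)) ∧
        c' x (y * e) e = θ (r (x * y * e))) := by
  intro d c'
  have : Std.Commutative (α := A) (· * ·) := ⟨hAcomm⟩
  have M : IsModuleStructure θ η := ⟨hθE, hθmul, hηhom, hηmul, hη1, hη2⟩
  have hc : IsCochain3 θ c := hc
  have hcoc : IsCocycle3 η c := hcoc
  have hop : IsOrderPreserving3 c := hop
  have hd := hc.isCochain2_normalizingCochain M
  have hd_mono := hop.isOrderPreserving2_normalizingCochain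
  exact ⟨hd, hd_mono, hc.mul M (hd.isCochain3_coboundary2 M),
    hcoc.mul M (hd.isCocycle3_coboundary2 M), hop.mul (hd_mono.isOrderPreserving3_coboundary2 M),
    hcoc.isNormalized3_mul_coboundary2 hc M⟩

/-- With `d(x,y) = c(x x⁻¹, x, y)⁻¹ c(x, y, y⁻¹ y)`, `d` is an order-preserving
2-cochain and `c · δ²d` is a normalized order-preserving 3-cocycle; hence every
order-preserving 3-cocycle is cohomologous in `Z³_≤` to a normalized one. -/
theorem cocycle_cohomologous_to_normalized {T A : Type*}
    [InverseSemigroup T] [InverseSemigroup A]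
    (θ : T → A) (η : T → A → A)
    (hAcomm : ∀ a b : A, a * b = b * a)
    (hθE : ∀ e ∈ E T, θ e ∈ E A)
    (hθinj : ∀ e ∈ E T, ∀ f ∈ E T, θ e = θ f → e = f)
    (hθsurj : ∀ a ∈ E A, ∃ e ∈ E T, θ e = a)
    (hθmul : ∀ e ∈ E T, ∀ f ∈ E T, θ (e * f) = θ e * θ f)
    (hηhom : ∀ t u : T, ∀ a : A, η (t * u) a = η t (η u a))
    (hηmul : ∀ t : T, ∀ a b : A, η t (a * b) = η t a * η t b)
    (hη1 : ∀ e ∈ E T, ∀ a : A, η e a = θ e * a)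
    (hη2 : ∀ t : T, ∀ e ∈ E T, η t (θ e) = θ (t * e * t⁻¹))
    (c : T → T → T → A)
    (hc : ∀ x y z : T, c x y z * (c x y z)⁻¹ = θ (r (x * y * z)))
    (hcoc : ∀ x y z w : T,
      η x (c y z w) * c x y z * c x (y * z) w = c x y (z * w) * c (x * y) z w)
    (hop : ∀ x x' y y' z z' : T, nle x x' → nle y y' → nle z z' →
      nle (c x y z) (c x' y' z'))
    : let d : T → T → A := fun x y => (c (x * x⁻¹) x y)⁻¹ * c x y (y⁻¹ * y)
      let c' : T → T → T → A := fun x y z =>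
        c x y z * (η x (d y z) * (d (x * y) z)⁻¹ * d x (y * z) * (d x y)⁻¹)
      (∀ x y : T, d x y * (d x y)⁻¹ = θ (r (x * y))) ∧
      (∀ x x' y y' : T, nle x x' → nle y y' → nle (d x y) (d x' y')) ∧
      (∀ x y z : T, c' x y z * (c' x y z)⁻¹ = θ (r (x * y * z))) ∧
      (∀ x y z w : T,
        η x (c' y z w) * c' x y z * c' x (y * z) w = c' x y (z * w) * c' (x * y) z w) ∧
      (∀ x x' y y' z z' : T, nle x x' → nle y y' → nle z z' →
        nle (c' x y z) (c' x' y' z')) ∧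
      (∀ x y : T, ∀ e ∈ E T,
        c' e (e * x) y = θ (r (e * x * y)) ∧
        c' (x * e) e (e * y) = θ (r (x * e * y)) ∧
        c' x (y * e) e = θ (r (x * y * e))) :=
  cocycle_cohomologous_to_normalized_general θ η hAcomm hθE hθmul hηhom hηmul hη1 hη2 c hc hcoc hop
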